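/- Let H ∈ R^{m×m} be symmetric positive definite, let m ≤ n, and let W ∈ R^{m×n} have orthonormal rows, i.e. W Wᵀ = I_m. Then whitening fixes the gradient direction: (H W (H W)ᵀ)^{-1/2} (H W) = W; moreover the Schatten 1-norm satisfies ‖H W‖₁ = Tr(H). -/

import Mathlib

open Matrix

open Classical in
/-- The unique positive semidefinite square root of a positive semidefinite matrix
(junk value `0` if `A` is not positive semidefinite). -/
noncomputable def matSqrt {m : ℕ} (A : Matrix (Fin m) (Fin m) ℝ) : Matrix (Fin m) (Fin m) ℝ :=
  if h : A.PosSemidef then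
    h.1.eigenvectorUnitary.1 * diagonal (Real.sqrt ∘ h.1.eigenvalues) *
      (star h.1.eigenvectorUnitary : Matrix (Fin m) (Fin m) ℝ)
  else 0

/-- The GradWhitening operator `A ↦ (A Aᵀ)^{-1/2} A`. -/
noncomputable def whiten {m n : ℕ} (A : Matrix (Fin m) (Fin n) ℝ) : Matrix (Fin m) (Fin n) ℝ :=
  (matSqrt (A * Aᵀ))⁻¹ * A

/-- The Schatten 1-norm (sum of singular values): `‖A‖₁ = Tr((A Aᵀ)^{1/2})`. -/
noncomputable def schattenOne {m n : ℕ} (A : Matrix (Fin m) (Fin n) ℝ) : ℝ :=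
  (matSqrt (A * Aᵀ)).trace

/-- The quadratic loss `L(W) = (1/2) * Tr(Wᵀ H W)`. -/
noncomputable def loss {m n : ℕ} (H : Matrix (Fin m) (Fin m) ℝ)
    (W : Matrix (Fin m) (Fin n) ℝ) : ℝ :=
  (1 / 2) * (Wᵀ * H * W).trace

/-! Orthonormal rows give `(H W)(H W)ᵀ = H²`, whose positive semidefinite square root is `H`
itself; whitening then multiplies `H W` by `H⁻¹`, and the Schatten norm is `Tr H`. -/

open scoped MatrixOrder in
theorem Matrix.PosSemidef.matSqrt_eq_sqrt {m : ℕ} {A : Matrix (Fin m) (Fin m) ℝ}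
    (hA : A.PosSemidef) : matSqrt A = CFC.sqrt A := by
  rw [matSqrt, dif_pos hA, CFC.sqrt_eq_real_sqrt A hA.nonneg, cfcₙ_eq_cfc, hA.1.cfc_eq,
    IsHermitian.cfc, Unitary.conjStarAlgAut_apply]
  simp [Function.comp_def]

open scoped MatrixOrder in
theorem Matrix.PosSemidef.matSqrt_mul_self {m : ℕ} {B : Matrix (Fin m) (Fin m) ℝ}
    (hB : B.PosSemidef) : matSqrt (B * B) = B := by
  have hBB : (B * B).PosSemidef := by
    simpa only [hB.1.eq] using posSemidef_conjTranspose_mul_self B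
  rw [hBB.matSqrt_eq_sqrt, CFC.sqrt_mul_self B hB.nonneg]

theorem Matrix.mul_mul_transpose_of_mul_transpose_eq_one {l m n R : Type*} [Fintype m]
    [Fintype n] [DecidableEq m] [CommSemiring R] (H : Matrix l m R) {W : Matrix m n R}
    (hW : W * Wᵀ = 1) : H * W * (H * W)ᵀ = H * Hᵀ := by
  rw [transpose_mul, Matrix.mul_assoc, ← Matrix.mul_assoc W, hW, Matrix.one_mul]

theorem whiten_of_orthonormal_rows_general {m n : ℕ}
    (H : Matrix (Fin m) (Fin m) ℝ) (hH : H.PosDef)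
    (W : Matrix (Fin m) (Fin n) ℝ) (hW : W * Wᵀ = 1) :
    whiten (H * W) = W ∧ schattenOne (H * W) = H.trace := by
  have hsqrt : matSqrt (H * W * (H * W)ᵀ) = H := by
    rw [mul_mul_transpose_of_mul_transpose_eq_one H hW, ← conjTranspose_eq_transpose_of_trivial,
      hH.isHermitian.eq, hH.posSemidef.matSqrt_mul_self]
  refine ⟨?_, ?_⟩
  · rw [whiten, hsqrt, ← Matrix.mul_assoc, nonsing_inv_mul _ hH.det_pos.ne'.isUnit,
      Matrix.one_mul]
  · rw [schattenOne, hsqrt]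

/-- If `W` has orthonormal rows then whitening fixes the gradient direction:
`(H W (H W)ᵀ)^{-1/2} (H W) = W`, and `‖H W‖₁ = Tr(H)`. -/
theorem whiten_of_orthonormal_rows {m n : ℕ} (hmn : m ≤ n)
    (H : Matrix (Fin m) (Fin m) ℝ) (hH : H.PosDef)
    (W : Matrix (Fin m) (Fin n) ℝ) (hW : W * Wᵀ = 1) :
    whiten (H * W) = W ∧ schattenOne (H * W) = H.trace :=
  whiten_of_orthonormal_rows_general H hH W hW
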